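/- arXiv:2507.09636 — 6 statements merged into one kernel-verified Lean document; each statement's English description precedes it below -/
import Mathlib

section
/- Every finitely generated free group is Hopfian: any surjective group endomorphism of a finitely generated free group is an isomorphism. -/
/-!
Mal'cev's argument: if `f : G →* G` is surjective and `f g = 1` with `g ≠ 1`, residual finiteness
gives a finite quotient `π : G →* Q` with `π g ≠ 1`. Precomposition with `f` is injective on the
finite set `G →* Q` (finite because `G` is finitely generated), hence surjective, so `π = ψ ∘ f`
kills `g`, a contradiction. Free groups are residually finite because a nontrivial reduced word of
length `n` already acts nontrivially on `{0, …, n}`: each letter can be made to move one position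
down, so that the whole word sends `n` to `0`.
-/

open Function Equiv

theorem MonoidHom.finite_of_fg {G H : Type*} [Group G] [Group H] [Group.FG G] [Finite H] :
    Finite (G →* H) := by
  obtain ⟨S, hS⟩ := Group.fg_def.mp ‹_›
  refine Finite.of_injective (fun φ : G →* H ↦ fun s : S ↦ φ s) fun φ ψ h ↦ ?_
  exact MonoidHom.eq_of_eqOn_dense hS fun s hs ↦ congrFun h ⟨s, hs⟩

theorem Group.ResiduallyFinite.injective_of_surjective {G : Type*} [Group G] [Group.FG G]
    [Group.ResiduallyFinite G] {f : G →* G} (hf : Surjective f) : Injective f := by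
  refine (injective_iff_map_eq_one f).mpr fun g hg ↦ by_contra fun hne ↦ ?_
  obtain ⟨N, hgN⟩ := Group.exists_finiteIndexNormalSubgroup_notMem g hne
  have : Finite (G →* G ⧸ N.toSubgroup) := MonoidHom.finite_of_fg
  obtain ⟨ψ, hψ⟩ := Finite.injective_iff_surjective.mp
    (fun _ _ ↦ (MonoidHom.cancel_right hf).mp) (QuotientGroup.mk' N.toSubgroup)
  refine hgN ((QuotientGroup.eq_one_iff g).mp ?_)
  rw [← QuotientGroup.mk'_apply, ← hψ, MonoidHom.comp_apply, hg, map_one]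

namespace FreeGroup

variable {α : Type*}

theorem IsReduced.getElem_snd_eq {L : List (α × Bool)} (h : IsReduced L) {k : ℕ}
    (hk : k + 1 < L.length) (h1 : L[k].1 = L[k + 1].1) : L[k].2 = L[k + 1].2 :=
  h.getElem k hk h1

variable (L : List (α × Bool))

/-- `Fin (L.length + 1)` are the gaps of the word `L`, letter `k` sitting between gaps `k` and
`k + 1`. A permutation for the generator `i` that sends `letterGap L true k` to
`letterGap L false k` makes the letter `k = (i, ±)` move gap `k + 1` to gap `k`. -/
def letterGap (c : Bool) (k : Fin L.length) : Fin (L.length + 1) :=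
  if L[k].2 = c then k.succ else k.castSucc

variable {L}

theorem IsReduced.letterGap_injective (h : IsReduced L) (c : Bool) (i : α) :
    Injective fun k : {k : Fin L.length // L[k].1 = i} ↦ letterGap L c k := by
  have adjacent {k : ℕ} (hk : k + 1 < L.length) (hi : L[k].1 = i) (hi' : L[k + 1].1 = i)
      (hc : L[k].2 = c) (hc' : L[k + 1].2 ≠ c) : False :=
    hc' (hc ▸ (h.getElem_snd_eq hk (hi.trans hi'.symm)).symm)
  rintro ⟨⟨k, hk⟩, hi⟩ ⟨⟨k', hk'⟩, hi'⟩ he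
  simp only [letterGap, Subtype.mk.injEq, Fin.getElem_fin] at he hi hi' ⊢
  split_ifs at he with hc hc' hc' <;>
    simp only [Fin.ext_iff, Fin.val_succ, Fin.val_castSucc] at he ⊢
  · omega
  · subst he; exact (adjacent hk' hi hi' hc hc').elim
  · subst he; exact (adjacent hk hi' hi hc' hc).elim
  · exact he

theorem IsReduced.exists_perm_letterGap (h : IsReduced L) (i : α) :
    ∃ σ : Perm (Fin (L.length + 1)),
      ∀ k : Fin L.length, L[k].1 = i → σ (letterGap L true k) = letterGap L false k := by
  obtain ⟨σ, hσ⟩ := Perm.exists_extending_pair _ _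
    (h.letterGap_injective true i) (h.letterGap_injective false i)
  exact ⟨σ, fun k hk ↦ hσ ⟨k, hk⟩⟩

theorem letter_apply_succ {σ : α → Perm (Fin (L.length + 1))}
    (hσ : ∀ k : Fin L.length, σ L[k].1 (letterGap L true k) = letterGap L false k)
    (k : Fin L.length) :
    cond L[k].2 (σ L[k].1) (σ L[k].1)⁻¹ k.succ = k.castSucc := by
  have hk := hσ k
  rcases hb : L[k].2
  · simp only [letterGap, hb, Bool.false_eq_true, if_false, if_true] at hk
    exact Perm.inv_eq_iff_eq.mpr hk.symm
  · simpa only [letterGap, hb, Bool.true_eq_false, if_false, if_true, cond_true] using hk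

theorem lift_mk_apply_last {σ : α → Perm (Fin (L.length + 1))}
    (hσ : ∀ k : Fin L.length, σ L[k].1 (letterGap L true k) = letterGap L false k) :
    lift σ (mk L) (Fin.last _) = 0 := by
  suffices ∀ j (hj : j ≤ L.length),
      ((L.take j).map fun x ↦ cond x.2 (σ x.1) (σ x.1)⁻¹).prod ⟨j, by omega⟩ = 0 by
    rw [lift_mk]
    have h := this L.length le_rfl
    rw [List.take_length] at h
    exact h
  intro j hj
  induction j with
  | zero => rfl
  | succ j ih =>
    have hj' : cond L[j].2 (σ L[j].1) (σ L[j].1)⁻¹ ⟨j + 1, by omega⟩ = ⟨j, by omega⟩ :=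
      letter_apply_succ hσ ⟨j, by omega⟩
    rw [List.take_succ_eq_append_getElem (by omega), List.map_append, List.prod_append,
      List.map_singleton, List.prod_singleton, Perm.mul_apply, hj', ih (by omega)]

theorem IsReduced.exists_monoidHom_perm_ne_one (h : IsReduced L) (hL : L ≠ []) :
    ∃ φ : FreeGroup α →* Perm (Fin (L.length + 1)), φ (mk L) ≠ 1 := by
  choose σ hσ using h.exists_perm_letterGap
  refine ⟨lift σ, fun h1 ↦ hL ?_⟩
  have hlast := lift_mk_apply_last fun k ↦ hσ L[k].1 k rfl
  rw [h1, Perm.one_apply, Fin.last_eq_zero_iff] at hlast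
  exact List.eq_nil_of_length_eq_zero hlast

instance : Group.ResiduallyFinite (FreeGroup α) := by
  classical
  refine Group.residuallyFinite_of_forall_exists_finite_monoidHom.{_, 0} fun w hw ↦ ?_
  obtain ⟨φ, hφ⟩ := isReduced_toWord.exists_monoidHom_perm_ne_one (toWord_eq_nil_iff.not.mpr hw)
  exact ⟨_, _, inferInstance, φ, by rwa [mk_toWord] at hφ⟩

end FreeGroup

/-- Finitely generated free groups are Hopfian: every surjective endomorphism of a
finitely generated free group is an isomorphism (i.e. bijective). -/
theorem freeGroup_hopfian {ι : Type*} [Finite ι]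
    (f : FreeGroup ι →* FreeGroup ι) (hf : Function.Surjective f) :
    Function.Bijective f :=
  ⟨Group.ResiduallyFinite.injective_of_surjective hf, hf⟩
end

section
/- In the pure braid group P_n with generators A_{i,j}, define t_i := A_{1,i} A_{2,i} ⋯ A_{i-1,i}, A_{0,i} := (A_{1,i} ⋯ A_{n,i})⁻¹, and Ã_{0,i} := A_{0,i} · t_i². Then the product Ã_{0,1} Ã_{0,2} ⋯ Ã_{0,n} equals the identity in P_n. -/
open scoped commutatorElement

/-- Artin's braid relations on `k` generators `σ_1, …, σ_k` (0-indexed internally):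
far commutation and the braid relation. -/
def braidRels (k : ℕ) : Set (FreeGroup (Fin k)) :=
  { r | (∃ i j : Fin k, (i : ℕ) + 2 ≤ (j : ℕ) ∧
          r = ⁅FreeGroup.of i, FreeGroup.of j⁆) ∨
        (∃ i j : Fin k, (j : ℕ) = (i : ℕ) + 1 ∧
          r = FreeGroup.of i * FreeGroup.of j * FreeGroup.of i *
              (FreeGroup.of j * FreeGroup.of i * FreeGroup.of j)⁻¹) }

/-- The braid group on `n` strands, given by the Artin presentation. -/
abbrev BraidGroup (n : ℕ) : Type := PresentedGroup (braidRels (n - 1))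

/-- The Artin generator `σ_i` (1-based, `1 ≤ i ≤ n-1`) of `BraidGroup n`. -/
def braidSigma (n i : ℕ) : BraidGroup n :=
  if h : 1 ≤ i ∧ i - 1 < n - 1 then PresentedGroup.of ⟨i - 1, h.2⟩ else 1

/-- The standard pure braid generator `A_{i,j}` for `1 ≤ i < j ≤ n`:
`A_{i,j} = (σ_{j-1} ⋯ σ_{i+1}) σ_i² (σ_{j-1} ⋯ σ_{i+1})⁻¹`. -/
def braidAgen (n i j : ℕ) : BraidGroup n :=
  (((List.range' (i + 1) (j - 1 - i)).map (braidSigma n)).reverse).prod *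
    (braidSigma n i) ^ 2 *
    ((((List.range' (i + 1) (j - 1 - i)).map (braidSigma n)).reverse).prod)⁻¹

/-- `A_{i,j}` with the symmetry convention `A_{j,i} = A_{i,j}` and `A_{i,i} = 1`. -/
def braidA (n i j : ℕ) : BraidGroup n :=
  if i < j then braidAgen n i j else if j < i then braidAgen n j i else 1

/-- `A_{0,i} := (A_{1,i} A_{2,i} ⋯ A_{n,i})⁻¹`. -/
def braidA0 (n i : ℕ) : BraidGroup n :=
  (((List.range' 1 n).map fun k => braidA n k i).prod)⁻¹

/-- The full twist `z_n = ∏_{j=2}^{n} (A_{1,j} A_{2,j} ⋯ A_{j-1,j})`. -/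
def fullTwist (n : ℕ) : BraidGroup n :=
  ((List.range' 1 n).map fun j =>
    ((List.range' 1 (j - 1)).map fun i => braidA n i j).prod).prod

/-- The pure braid group `P_n`, as the subgroup of `BraidGroup n` generated by the
elements `A_{i,j}`, `1 ≤ i < j ≤ n`. -/
def PureBraid (n : ℕ) : Subgroup (BraidGroup n) :=
  Subgroup.closure { g | ∃ i j : ℕ, 1 ≤ i ∧ i < j ∧ j ≤ n ∧ g = braidA n i j }

/-- `t_i := A_{1,i} A_{2,i} ⋯ A_{i-1,i}`. -/
def braidT (n i : ℕ) : BraidGroup n :=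
  ((List.range' 1 (i - 1)).map fun k => braidA n k i).prod

/-- `Ã_{0,i} := A_{0,i} · t_i²`. -/
def braidA0tilde (n i : ℕ) : BraidGroup n :=
  braidA0 n i * (braidT n i) ^ 2

/-! With `d_i := A_{i,i+1} ⋯ A_{i,n}` (`braidRow n i n`) one has `A_{0,i} = (t_i d_i)⁻¹`, hence
`Ã_{0,i} = d_i⁻¹ t_i`, and the full twist factors both as `t_1 ⋯ t_n` and as `d_1 ⋯ d_n`.
In Artin generators, `t_k` lies in `⟨σ_1, …, σ_{k-1}⟩` while `d_m = (σ_m ⋯ σ_{n-1})(σ_{n-1} ⋯ σ_m)`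
lies in `⟨σ_m, …, σ_{n-1}⟩` and centralizes `σ_{m+1}, …, σ_{n-1}`. So `t_k` and `d_k` commute with
`d_m` for `k < m`, which lets the factors be sorted:
`∏ d_i⁻¹ t_i = (∏ d_i⁻¹)(∏ t_i) = (∏ d_i⁻¹)(∏ d_i) = ∏ d_i⁻¹ d_i = 1`. -/

theorem List.prod_map_mul_of_pairwise_commute {M ι : Type*} [Monoid M] {f g : ι → M} :
    ∀ {l : List ι}, l.Pairwise (fun i j => Commute (g i) (f j)) →
      (l.map fun i => f i * g i).prod = (l.map f).prod * (l.map g).prod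
  | [], _ => by simp
  | a :: l, h => by
    rw [List.pairwise_cons] at h
    have hga : Commute (g a) (l.map f).prod :=
      Commute.list_prod_right _ _ (by simpa using h.1)
    simp only [List.map_cons, List.prod_cons, List.prod_map_mul_of_pairwise_commute h.2]
    rw [mul_assoc, ← mul_assoc (g a), hga.eq, mul_assoc, mul_assoc]

theorem List.prod_map_range'_mul_of_commute {M : Type*} [Monoid M] {f g : ℕ → M} {a L : ℕ}
    (h : ∀ k m, a ≤ k → k < m → m < a + L → Commute (g k) (f m)) :
    ((List.range' a L).map fun i => f i * g i).prod =
      ((List.range' a L).map f).prod * ((List.range' a L).map g).prod :=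
  List.prod_map_mul_of_pairwise_commute <| (List.pairwise_lt_range' 1).imp_of_mem
    fun hk hm hkm => h _ _ (List.mem_range'_1.1 hk).1 hkm (List.mem_range'_1.1 hm).2

section Braid

variable {n : ℕ}

theorem braidSigma_commute {i j : ℕ} (hij : i + 2 ≤ j) :
    Commute (braidSigma n i) (braidSigma n j) := by
  unfold braidSigma
  split_ifs with hi hj hj
  · refine PresentedGroup.mk_eq_mk_of_mul_inv_mem (Or.inl ⟨⟨i - 1, hi.2⟩, ⟨j - 1, hj.2⟩, ?_, ?_⟩)
    · simp only; omega
    · simp [commutatorElement_def, mul_assoc]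
  all_goals simp

theorem braidSigma_braid {i : ℕ} (hi : 1 ≤ i) (hin : i + 2 ≤ n) :
    braidSigma n i * braidSigma n (i + 1) * braidSigma n i =
      braidSigma n (i + 1) * braidSigma n i * braidSigma n (i + 1) := by
  unfold braidSigma
  rw [dif_pos ⟨hi, by omega⟩, dif_pos ⟨by omega, by omega⟩]
  exact PresentedGroup.mk_eq_mk_of_mul_inv_mem (Or.inr ⟨_, _, by simp; omega, rfl⟩)

theorem braidSigma_mul_braidSigma_succ_conj {i : ℕ} (hi : 1 ≤ i) (hin : i + 2 ≤ n) :
    braidSigma n i * braidSigma n (i + 1) * braidSigma n i *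
      (braidSigma n i * braidSigma n (i + 1))⁻¹ = braidSigma n (i + 1) := by
  rw [braidSigma_braid hi hin]
  simp [mul_assoc]

theorem braidSigma_succ_mul_braidSigma_conj {i : ℕ} (hi : 1 ≤ i) (hin : i + 2 ≤ n) :
    braidSigma n (i + 1) * braidSigma n i * braidSigma n (i + 1) *
      (braidSigma n (i + 1) * braidSigma n i)⁻¹ = braidSigma n i := by
  rw [← braidSigma_braid hi hin]
  simp [mul_assoc]

def sigmaSpan (n a b : ℕ) : Subgroup (BraidGroup n) :=
  Subgroup.closure (braidSigma n '' Set.Ico a b)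

theorem braidSigma_mem_sigmaSpan {a b c : ℕ} (hac : a ≤ c) (hcb : c < b) :
    braidSigma n c ∈ sigmaSpan n a b :=
  Subgroup.subset_closure ⟨c, ⟨hac, hcb⟩, rfl⟩

theorem sigmaSpan_mono {a b a' b' : ℕ} (ha : a' ≤ a) (hb : b ≤ b') :
    sigmaSpan n a b ≤ sigmaSpan n a' b' :=
  Subgroup.closure_mono (Set.image_mono (Set.Ico_subset_Ico ha hb))

theorem commute_of_mem_sigmaSpan {g x : BraidGroup n} {a b : ℕ}
    (hg : ∀ c, a ≤ c → c < b → Commute g (braidSigma n c)) (hx : x ∈ sigmaSpan n a b) :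
    Commute g x := by
  have hle : sigmaSpan n a b ≤ Subgroup.centralizer {g} := by
    refine Subgroup.closure_le _ |>.2 ?_
    rintro _ ⟨c, ⟨hac, hcb⟩, rfl⟩
    exact Subgroup.mem_centralizer_singleton_iff.2 (hg c hac hcb).eq.symm
  exact (Subgroup.mem_centralizer_singleton_iff.1 (hle hx)).symm

theorem commute_of_mem_sigmaSpan_of_lt {x y : BraidGroup n} {a b c d : ℕ}
    (hx : x ∈ sigmaSpan n a b) (hy : y ∈ sigmaSpan n c d) (hbc : b < c) : Commute x y :=
  commute_of_mem_sigmaSpan (fun _ hc _ => (commute_of_mem_sigmaSpan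
    (fun _ _ he => (braidSigma_commute (by omega)).symm) hx).symm) hy

def sigmaUp (n a l : ℕ) : BraidGroup n := ((List.range' a l).map (braidSigma n)).prod

def sigmaDown (n a l : ℕ) : BraidGroup n := ((List.range' a l).map (braidSigma n)).reverse.prod

theorem sigmaUp_add (a l₁ l₂ : ℕ) :
    sigmaUp n a (l₁ + l₂) = sigmaUp n a l₁ * sigmaUp n (a + l₁) l₂ := by
  rw [sigmaUp, sigmaUp, sigmaUp, ← List.range'_append, List.map_append, List.prod_append,
    Nat.one_mul]

theorem sigmaDown_add (a l₁ l₂ : ℕ) :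
    sigmaDown n a (l₁ + l₂) = sigmaDown n (a + l₁) l₂ * sigmaDown n a l₁ := by
  rw [sigmaDown, sigmaDown, sigmaDown, ← List.range'_append, List.map_append, List.reverse_append,
    List.prod_append, Nat.one_mul]

theorem sigmaUp_succ (a l : ℕ) : sigmaUp n a (l + 1) = sigmaUp n a l * braidSigma n (a + l) := by
  rw [sigmaUp_add]
  simp [sigmaUp]

theorem sigmaDown_succ (a l : ℕ) :
    sigmaDown n a (l + 1) = braidSigma n (a + l) * sigmaDown n a l := by
  rw [sigmaDown_add]
  simp [sigmaDown]

theorem sigmaUp_mem_sigmaSpan (a l : ℕ) : sigmaUp n a l ∈ sigmaSpan n a (a + l) :=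
  Subgroup.list_prod_mem _ fun x hx => by
    obtain ⟨c, hc, rfl⟩ := List.mem_map.1 hx
    exact braidSigma_mem_sigmaSpan (List.mem_range'_1.1 hc).1 (List.mem_range'_1.1 hc).2

theorem sigmaDown_mem_sigmaSpan (a l : ℕ) : sigmaDown n a l ∈ sigmaSpan n a (a + l) :=
  Subgroup.list_prod_mem _ fun x hx => by
    obtain ⟨c, hc, rfl⟩ := List.mem_map.1 (List.mem_reverse.1 hx)
    exact braidSigma_mem_sigmaSpan (List.mem_range'_1.1 hc).1 (List.mem_range'_1.1 hc).2

theorem sigmaDown_conj_braidSigma_succ {a l j : ℕ} (ha : 1 ≤ a) (haj : a ≤ j)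
    (hjl : j + 2 ≤ a + l) (hl : a + l ≤ n) :
    sigmaDown n a l * braidSigma n (j + 1) * (sigmaDown n a l)⁻¹ = braidSigma n j := by
  obtain ⟨p, rfl⟩ := Nat.exists_eq_add_of_le haj
  obtain ⟨r, rfl⟩ : ∃ r, l = p + 2 + r := ⟨l - (p + 2), by omega⟩
  set x := braidSigma n (a + p)
  set y := braidSigma n (a + p + 1)
  have hbot : Commute (sigmaDown n a p) y :=
    commute_of_mem_sigmaSpan_of_lt (sigmaDown_mem_sigmaSpan a p)
      (braidSigma_mem_sigmaSpan le_rfl (Nat.lt_succ_self _)) (by omega)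
  have htop : Commute (sigmaDown n (a + p + 2) r) x :=
    (commute_of_mem_sigmaSpan_of_lt (braidSigma_mem_sigmaSpan le_rfl (Nat.lt_succ_self _))
      (sigmaDown_mem_sigmaSpan (a + p + 2) r) (by omega)).symm
  have hmid : y * x * y * (y * x)⁻¹ = x :=
    braidSigma_succ_mul_braidSigma_conj (by omega) (by omega)
  have hsplit :
      sigmaDown n a (p + 2 + r) = sigmaDown n (a + p + 2) r * (y * x) * sigmaDown n a p := by
    have hpair : sigmaDown n (a + p) 2 = y * x := by simp [sigmaDown, List.range'_succ, x, y]
    rw [sigmaDown_add, sigmaDown_add, hpair, ← Nat.add_assoc]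
    simp only [mul_assoc]
  rw [hsplit]
  calc _ = sigmaDown n (a + p + 2) r * (y * x * (sigmaDown n a p * y * (sigmaDown n a p)⁻¹) *
          (y * x)⁻¹) * (sigmaDown n (a + p + 2) r)⁻¹ := by simp only [mul_inv_rev, mul_assoc]
    _ = x := by rw [hbot.mul_inv_cancel, hmid, htop.mul_inv_cancel]

theorem sigmaUp_conj_braidSigma {a l j : ℕ} (ha : 1 ≤ a) (haj : a ≤ j)
    (hjl : j + 2 ≤ a + l) (hl : a + l ≤ n) :
    sigmaUp n a l * braidSigma n j * (sigmaUp n a l)⁻¹ = braidSigma n (j + 1) := by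
  obtain ⟨p, rfl⟩ := Nat.exists_eq_add_of_le haj
  obtain ⟨r, rfl⟩ : ∃ r, l = p + 2 + r := ⟨l - (p + 2), by omega⟩
  set x := braidSigma n (a + p)
  set y := braidSigma n (a + p + 1)
  have hbot : Commute (sigmaUp n a p) y :=
    commute_of_mem_sigmaSpan_of_lt (sigmaUp_mem_sigmaSpan a p)
      (braidSigma_mem_sigmaSpan le_rfl (Nat.lt_succ_self _)) (by omega)
  have htop : Commute (sigmaUp n (a + p + 2) r) x :=
    (commute_of_mem_sigmaSpan_of_lt (braidSigma_mem_sigmaSpan le_rfl (Nat.lt_succ_self _))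
      (sigmaUp_mem_sigmaSpan (a + p + 2) r) (by omega)).symm
  have hmid : x * y * x * (x * y)⁻¹ = y :=
    braidSigma_mul_braidSigma_succ_conj (by omega) (by omega)
  have hsplit : sigmaUp n a (p + 2 + r) = sigmaUp n a p * (x * y) * sigmaUp n (a + p + 2) r := by
    have hpair : sigmaUp n (a + p) 2 = x * y := by simp [sigmaUp, List.range'_succ, x, y]
    rw [sigmaUp_add, sigmaUp_add, hpair, ← Nat.add_assoc]
  rw [hsplit]
  calc _ = sigmaUp n a p * (x * y * (sigmaUp n (a + p + 2) r * x * (sigmaUp n (a + p + 2) r)⁻¹) *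
          (x * y)⁻¹) * (sigmaUp n a p)⁻¹ := by simp only [mul_inv_rev, mul_assoc]
    _ = y := by rw [htop.mul_inv_cancel, hmid, hbot.mul_inv_cancel]

theorem sigmaDown_mul_sigmaDown_succ_conj {k : ℕ} (hk : 1 ≤ k) :
    ∀ {l : ℕ}, k + l + 1 ≤ n → sigmaDown n k l * sigmaDown n (k + 1) l * braidSigma n k *
      (sigmaDown n k l * sigmaDown n (k + 1) l)⁻¹ = braidSigma n (k + l)
  | 0, _ => by simp [sigmaDown]
  | l + 1, hl => by
    have hcomm : Commute (sigmaDown n k l) (braidSigma n (k + l + 1)) :=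
      commute_of_mem_sigmaSpan_of_lt (sigmaDown_mem_sigmaSpan k l)
        (braidSigma_mem_sigmaSpan le_rfl (Nat.lt_succ_self _)) (Nat.lt_succ_self _)
    have hsplit : sigmaDown n k (l + 1) * sigmaDown n (k + 1) (l + 1) =
        braidSigma n (k + l) * braidSigma n (k + l + 1) *
          (sigmaDown n k l * sigmaDown n (k + 1) l) := by
      rw [sigmaDown_succ, sigmaDown_succ, Nat.add_right_comm, mul_assoc,
        ← mul_assoc _ _ (sigmaDown n (k + 1) l), hcomm.eq]
      simp only [mul_assoc]
    rw [hsplit]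
    calc _ = braidSigma n (k + l) * braidSigma n (k + l + 1) *
          (sigmaDown n k l * sigmaDown n (k + 1) l * braidSigma n k *
            (sigmaDown n k l * sigmaDown n (k + 1) l)⁻¹) *
          (braidSigma n (k + l) * braidSigma n (k + l + 1))⁻¹ := by
          simp only [mul_inv_rev, mul_assoc]
      _ = braidSigma n (k + l + 1) := by
          rw [sigmaDown_mul_sigmaDown_succ_conj hk (by omega),
            braidSigma_mul_braidSigma_succ_conj (by omega) (by omega)]

theorem braidA_of_lt {i j : ℕ} (h : i < j) : braidA n i j = braidAgen n i j := if_pos h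

theorem braidAgen_eq_conj (i j : ℕ) : braidAgen n i j =
    sigmaDown n (i + 1) (j - 1 - i) * braidSigma n i ^ 2 * (sigmaDown n (i + 1) (j - 1 - i))⁻¹ :=
  rfl

theorem braidA_symm (i j : ℕ) : braidA n i j = braidA n j i := by
  unfold braidA
  split_ifs <;> first | rfl | omega

theorem braidA_self (i : ℕ) : braidA n i i = 1 := by
  simp [braidA]

theorem braidA_mem_sigmaSpan {i j : ℕ} (h : i < j) : braidA n i j ∈ sigmaSpan n i j := by
  have hX : sigmaDown n (i + 1) (j - 1 - i) ∈ sigmaSpan n i j :=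
    sigmaSpan_mono (Nat.le_succ i) (by omega) (sigmaDown_mem_sigmaSpan _ _)
  rw [braidA_of_lt h, braidAgen_eq_conj]
  exact mul_mem (mul_mem hX (pow_mem (braidSigma_mem_sigmaSpan le_rfl h) 2)) (inv_mem hX)

theorem braidSigma_commute_braidA {k m j : ℕ} (hkj : k < j) (hjm : j + 2 ≤ m) (hm : m ≤ n) :
    Commute (braidSigma n j) (braidA n k m) := by
  have hshift := sigmaDown_conj_braidSigma_succ (n := n) (a := k + 1) (l := m - 1 - k) (j := j)
    (by omega) hkj (by omega) (by omega)
  rw [braidA_of_lt (by omega), braidAgen_eq_conj, ← hshift, Commute.conj_iff]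
  exact ((braidSigma_commute (i := k) (j := j + 1) (by omega)).pow_left 2).symm

theorem sigmaDown_conj_braidA {k l : ℕ} (hk : 1 ≤ k) (hl : k + l + 1 ≤ n) :
    sigmaDown n k l * braidA n k (k + l + 1) * (sigmaDown n k l)⁻¹ =
      braidSigma n (k + l) ^ 2 := by
  rw [braidA_of_lt (by omega), braidAgen_eq_conj, show k + l + 1 - 1 - k = l by omega,
    ← sigmaDown_mul_sigmaDown_succ_conj hk hl, conj_pow]
  simp only [mul_inv_rev, mul_assoc]

def braidRow (n k M : ℕ) : BraidGroup n :=
  ((List.range' (k + 1) (M - k)).map (braidA n k)).prod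

theorem braidRow_self (k : ℕ) : braidRow n k k = 1 := by
  simp [braidRow]

theorem braidRow_succ {k M : ℕ} (h : k ≤ M) :
    braidRow n k (M + 1) = braidRow n k M * braidA n k (M + 1) := by
  rw [braidRow, braidRow, show M + 1 - k = M - k + 1 by omega, List.range'_concat]
  simp only [List.map_append, List.prod_append, List.map_cons, List.map_nil, List.prod_cons,
    List.prod_nil, mul_one]
  congr 2
  omega

theorem braidRow_mem_sigmaSpan (k M : ℕ) : braidRow n k M ∈ sigmaSpan n k M :=
  Subgroup.list_prod_mem _ fun x hx => by
    obtain ⟨m, hm, rfl⟩ := List.mem_map.1 hx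
    have := List.mem_range'_1.1 hm
    exact sigmaSpan_mono le_rfl (by omega) (braidA_mem_sigmaSpan (by omega))

theorem braidT_mem_sigmaSpan (j : ℕ) : braidT n j ∈ sigmaSpan n 1 j :=
  Subgroup.list_prod_mem _ fun x hx => by
    obtain ⟨k, hk, rfl⟩ := List.mem_map.1 hx
    have := List.mem_range'_1.1 hk
    exact sigmaSpan_mono this.1 le_rfl (braidA_mem_sigmaSpan (by omega))

theorem braidRow_eq_sigmaUp_mul_sigmaDown {k : ℕ} (hk : 1 ≤ k) :
    ∀ {l : ℕ}, k + l ≤ n → braidRow n k (k + l) = sigmaUp n k l * sigmaDown n k l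
  | 0, _ => by simp [braidRow_self, sigmaUp, sigmaDown]
  | l + 1, hl => by
    have hA : sigmaDown n k l * braidA n k (k + l + 1) =
        braidSigma n (k + l) ^ 2 * sigmaDown n k l :=
      mul_inv_eq_iff_eq_mul.1 (sigmaDown_conj_braidA hk hl)
    rw [← Nat.add_assoc, braidRow_succ (by omega), braidRow_eq_sigmaUp_mul_sigmaDown hk (by omega),
      mul_assoc, hA, sigmaUp_succ, sigmaDown_succ, pow_two]
    simp only [mul_assoc]

theorem braidSigma_commute_braidRow {k j M : ℕ} (hk : 1 ≤ k) (hkj : k < j) (hjM : j < M)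
    (hM : M ≤ n) : Commute (braidSigma n j) (braidRow n k M) := by
  obtain ⟨l, rfl⟩ := Nat.exists_eq_add_of_le (Nat.le_of_lt (hkj.trans hjM))
  obtain ⟨i, rfl⟩ := Nat.exists_eq_add_of_lt hkj
  have hD := sigmaDown_conj_braidSigma_succ (n := n) (a := k) (l := l) (j := k + i) hk (by omega)
    (by omega) hM
  have hU := sigmaUp_conj_braidSigma (n := n) (a := k) (l := l) (j := k + i) hk (by omega)
    (by omega) hM
  refine Commute.symm (mul_inv_eq_iff_eq_mul.1 ?_)
  rw [braidRow_eq_sigmaUp_mul_sigmaDown hk hM]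
  calc _ = sigmaUp n k l * (sigmaDown n k l * braidSigma n (k + i + 1) * (sigmaDown n k l)⁻¹) *
        (sigmaUp n k l)⁻¹ := by simp only [mul_inv_rev, mul_assoc]
    _ = _ := by rw [hD, hU]

theorem braidT_commute_braidRow {k m M : ℕ} (hkm : k < m) :
    Commute (braidT n k) (braidRow n m M) :=
  commute_of_mem_sigmaSpan_of_lt (braidT_mem_sigmaSpan k) (braidRow_mem_sigmaSpan m M) hkm

theorem braidRow_commute_braidRow {k m M : ℕ} (hk : 1 ≤ k) (hkm : k < m) (hM : M ≤ n) :
    Commute (braidRow n k M) (braidRow n m M) :=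
  commute_of_mem_sigmaSpan
    (fun _ hmc hcM => (braidSigma_commute_braidRow hk (hkm.trans_le hmc) hcM hM).symm)
    (braidRow_mem_sigmaSpan m M)

theorem braidA_commute_braidRow {k m M : ℕ} (hkm : k < m) (hM : M + 1 ≤ n) :
    Commute (braidA n k (M + 1)) (braidRow n m M) :=
  commute_of_mem_sigmaSpan
    (fun _ hmc hcM => (braidSigma_commute_braidA (hkm.trans_le hmc) (by omega) hM).symm)
    (braidRow_mem_sigmaSpan m M)

theorem prod_braidT_eq_prod_braidRow : ∀ {M : ℕ}, M ≤ n →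
    ((List.range' 1 M).map (braidT n)).prod = ((List.range' 1 M).map fun k => braidRow n k M).prod
  | 0, _ => rfl
  | M + 1, hM => by
    have hT : braidT n (M + 1) = ((List.range' 1 M).map fun k => braidA n k (M + 1)).prod := rfl
    have hrows : ((List.range' 1 M).map fun k => braidRow n k (M + 1)).prod =
        ((List.range' 1 M).map fun k => braidRow n k M).prod * braidT n (M + 1) := by
      rw [hT, ← List.prod_map_range'_mul_of_commute
        fun _ _ _ hkm _ => braidA_commute_braidRow hkm hM]
      refine congrArg List.prod (List.map_congr_left fun k hk => braidRow_succ ?_)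
      have := List.mem_range'_1.1 hk
      omega
    rw [List.range'_concat, Nat.one_mul, Nat.add_comm 1 M, List.map_append, List.map_append,
      List.prod_append, List.prod_append, prod_braidT_eq_prod_braidRow (by omega)]
    simp [hrows, braidRow_self]

theorem braidA0_eq {i : ℕ} (hi : 1 ≤ i) (hin : i ≤ n) :
    braidA0 n i = (braidT n i * braidRow n i n)⁻¹ := by
  have hsplit : List.range' 1 n = List.range' 1 (i - 1) ++ i :: List.range' (i + 1) (n - i) := by
    have h := List.range'_append (s := 1) (m := i - 1) (n := n - i + 1) (step := 1)
    rw [show 1 + 1 * (i - 1) = i by omega, show i - 1 + (n - i + 1) = n by omega] at h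
    rw [← List.range'_succ, h]
  have hrow : braidRow n i n = ((List.range' (i + 1) (n - i)).map fun k => braidA n k i).prod := by
    rw [braidRow]
    exact congrArg List.prod (List.map_congr_left fun k _ => braidA_symm i k)
  rw [braidA0, hsplit, List.map_append, List.prod_append, List.map_cons, List.prod_cons,
    braidA_self, one_mul, hrow, braidT]

theorem braidA0tilde_eq {i : ℕ} (hi : 1 ≤ i) (hin : i ≤ n) :
    braidA0tilde n i = (braidRow n i n)⁻¹ * braidT n i := by
  rw [braidA0tilde, braidA0_eq hi hin, pow_two, mul_inv_rev, mul_assoc, inv_mul_cancel_left]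

end Braid

/-- In `P_n`, with `t_i := A_{1,i} ⋯ A_{i-1,i}`, `A_{0,i} := (A_{1,i} ⋯ A_{n,i})⁻¹`
and `Ã_{0,i} := A_{0,i} t_i²`, the product `Ã_{0,1} Ã_{0,2} ⋯ Ã_{0,n}` is trivial. -/
theorem prod_A0tilde_eq_one (n : ℕ) :
    ((List.range' 1 n).map (braidA0tilde n)).prod = 1 := by
  have hA0tilde : ∀ i ∈ List.range' 1 n, braidA0tilde n i = (braidRow n i n)⁻¹ * braidT n i := by
    intro i hi
    obtain ⟨h1, h2⟩ := List.mem_range'_1.1 hi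
    exact braidA0tilde_eq h1 (by omega)
  rw [List.map_congr_left hA0tilde,
    List.prod_map_range'_mul_of_commute fun _ _ _ hkm _ => (braidT_commute_braidRow hkm).inv_right,
    prod_braidT_eq_prod_braidRow le_rfl,
    ← List.prod_map_range'_mul_of_commute fun _ _ hk hkm _ =>
      (braidRow_commute_braidRow hk hkm le_rfl).inv_right]
  simp
end

section
/- In the pure braid group P_3 with generators A_{1,2}, A_{1,3}, A_{2,3}, the cyclic subgroups generated by A_{1,2} A_{1,3} A_{2,3} A_{1,2} and by A_{1,2} A_{1,3} A_{2,3} intersect trivially. -/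
/-!
Send `B₃` to `SL(2, ℤ)` by `σ₁ ↦ T`, `σ₂ ↦ S T S⁻¹` (the reduced Burau representation at
`t = -1`). The full twist `z = A₁₂ A₁₃ A₂₃` goes to `-1`, of order two, while `z A₁₂` goes to
`-T²`, of infinite order. If `(z A₁₂)^m = z^k`, then `(-T²)^m` has finite order, so `m = 0`.
-/

open scoped commutatorElement

open Subgroup Matrix.SpecialLinearGroup ModularGroup

open scoped MatrixGroups

theorem Subgroup.zpowers_inf_zpowers_eq_bot_of_map {G H : Type*} [Group G] [Group H]
    (f : G →* H) {a b : G} (ha : ¬IsOfFinOrder (f a)) (hb : IsOfFinOrder (f b)) :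
    zpowers a ⊓ zpowers b = ⊥ := by
  refine eq_bot_iff.2 fun g hg => ?_
  obtain ⟨⟨m, rfl⟩, ⟨k, hk⟩⟩ := (mem_inf.1 hg).imp mem_zpowers_iff.1 mem_zpowers_iff.1
  have hm : IsOfFinOrder (f a ^ m) := by
    rw [← map_zpow, ← hk, map_zpow]
    exact hb.zpow
  obtain ⟨n, hn, hmn⟩ := isOfFinOrder_iff_zpow_eq_one.1 hm
  have hmn0 : m * n = 0 :=
    injective_zpow_iff_not_isOfFinOrder.2 ha (by simpa only [zpow_mul, zpow_zero] using hmn)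
  rw [(mul_eq_zero.1 hmn0).resolve_right hn, zpow_zero]
  exact one_mem _

theorem ModularGroup.not_isOfFinOrder_T : ¬IsOfFinOrder T := by
  refine injective_zpow_iff_not_isOfFinOrder.1 fun m n hmn => ?_
  simpa [coe_T_zpow] using congr_arg (fun g : SL(2, ℤ) => (g : Matrix (Fin 2) (Fin 2) ℤ) 0 1) hmn

theorem ModularGroup.not_isOfFinOrder_neg_T_pow {n : ℕ} (hn : n ≠ 0) : ¬IsOfFinOrder (-T ^ n) := by
  intro h
  have h2 := h.pow (n := 2)
  rw [neg_sq, ← pow_mul, isOfFinOrder_pow] at h2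
  exact h2.elim not_isOfFinOrder_T (by omega)

def braidToSL2Gen : Fin (3 - 1) → SL(2, ℤ) := ![T, S * T * S⁻¹]

theorem braidToSL2_rels : ∀ r ∈ braidRels (3 - 1), FreeGroup.lift braidToSL2Gen r = 1 := by
  rintro r (⟨i, j, hij, rfl⟩ | ⟨i, j, hij, rfl⟩)
  · omega
  · fin_cases i <;> fin_cases j <;> simp at hij
    decide

def braidToSL2 : BraidGroup 3 →* SL(2, ℤ) := PresentedGroup.toGroup braidToSL2_rels

theorem braidToSL2_sigma_one : braidToSL2 (braidSigma 3 1) = T := by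
  rw [braidSigma, dif_pos (by omega)]
  exact PresentedGroup.toGroup.of braidToSL2_rels

theorem braidToSL2_sigma_two : braidToSL2 (braidSigma 3 2) = S * T * S⁻¹ := by
  rw [braidSigma, dif_pos (by omega)]
  exact PresentedGroup.toGroup.of braidToSL2_rels

theorem braidA_three_one_two : braidA 3 1 2 = braidSigma 3 1 ^ 2 := by
  simp [braidA, braidAgen]

theorem braidA_three_one_three :
    braidA 3 1 3 = braidSigma 3 2 * braidSigma 3 1 ^ 2 * (braidSigma 3 2)⁻¹ := by
  simp [braidA, braidAgen]

theorem braidA_three_two_three : braidA 3 2 3 = braidSigma 3 2 ^ 2 := by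
  simp [braidA, braidAgen]

theorem fullTwist_three : fullTwist 3 = braidA 3 1 2 * braidA 3 1 3 * braidA 3 2 3 := by
  simp [fullTwist, List.range', mul_assoc]

theorem braidToSL2_braidA_one_two : braidToSL2 (braidA 3 1 2) = T ^ 2 := by
  rw [braidA_three_one_two, map_pow, braidToSL2_sigma_one]

theorem braidToSL2_fullTwist : braidToSL2 (fullTwist 3) = -1 := by
  rw [fullTwist_three, braidA_three_one_two, braidA_three_one_three, braidA_three_two_three]
  simp only [map_mul, map_inv, map_pow, braidToSL2_sigma_one, braidToSL2_sigma_two]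
  decide

/-- In `P_3`, the cyclic subgroups generated by `A_{1,2} A_{1,3} A_{2,3} A_{1,2}` and
by `A_{1,2} A_{1,3} A_{2,3}` intersect trivially. -/
theorem zpowers_intersect_trivially :
    Subgroup.zpowers (braidA 3 1 2 * braidA 3 1 3 * braidA 3 2 3 * braidA 3 1 2) ⊓
      Subgroup.zpowers (braidA 3 1 2 * braidA 3 1 3 * braidA 3 2 3) = ⊥ := by
  rw [← fullTwist_three]
  refine zpowers_inf_zpowers_eq_bot_of_map braidToSL2 ?_ ?_
  · rw [map_mul, braidToSL2_fullTwist, braidToSL2_braidA_one_two, neg_one_mul]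
    exact not_isOfFinOrder_neg_T_pow two_ne_zero
  · rw [braidToSL2_fullTwist]
    exact isOfFinOrder_iff_pow_eq_one.2 ⟨2, two_pos, neg_one_sq⟩
end

section
/- Let G_n be the group with presentation ⟨p_1,…,p_n, y_1,…,y_{n-1} | [y_i,y_j]=1 for all i,j; [p_i,y_j]=1 for j ≥ i; [p_i, y_j p_j p_{j+1}⁻¹]=1 for j < i⟩ (with conventions y_n = 1, p_{n+1} = 1). Then the subgroup N = ⟨p_1,…,p_n⟩ is normal and free of rank n, the subgroup Q = ⟨y_1,…,y_{n-1}⟩ is free abelian of rank n−1, and G_n = N ⋊ Q, where the conjugation action is given by p_i^{y_j} = p_i^{p_{j+1} p_j⁻¹} for j < i and p_i^{y_j} = p_i for j ≥ i. -/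
/-! The group `G_n` of the paper (here with `n = m + 1 ≥ 1`):
`G_n = ⟨p_1,…,p_n, y_1,…,y_{n-1} | [y_i,y_j] = 1; [p_i,y_j] = 1 (j ≥ i);
[p_i, y_j p_j p_{j+1}⁻¹] = 1 (j < i)⟩`.
Generators are 0-indexed: `p` over `Fin (m+1)` and `y` over `Fin m`. -/

/-- Free-group letter for `p_{i+1}` (0-indexed `i`). -/
def gnFreeP (m : ℕ) (i : Fin (m + 1)) : FreeGroup (Fin (m + 1) ⊕ Fin m) :=
  FreeGroup.of (Sum.inl i)

/-- Free-group letter for `y_{j+1}` (0-indexed `j`). -/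
def gnFreeY (m : ℕ) (j : Fin m) : FreeGroup (Fin (m + 1) ⊕ Fin m) :=
  FreeGroup.of (Sum.inr j)

open scoped commutatorElement

/-- The defining relators of `G_{m+1}`. -/
def gnRels (m : ℕ) : Set (FreeGroup (Fin (m + 1) ⊕ Fin m)) :=
  { r | (∃ i j : Fin m, r = ⁅gnFreeY m i, gnFreeY m j⁆) ∨
        (∃ (i : Fin (m + 1)) (j : Fin m), (i : ℕ) ≤ (j : ℕ) ∧
          r = ⁅gnFreeP m i, gnFreeY m j⁆) ∨
        (∃ (i : Fin (m + 1)) (j : Fin m), (j : ℕ) < (i : ℕ) ∧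
          r = ⁅gnFreeP m i,
                gnFreeY m j * gnFreeP m j.castSucc * (gnFreeP m j.succ)⁻¹⁆) }

/-- The group `G_{m+1}`. -/
abbrev GnGroup (m : ℕ) : Type := PresentedGroup (gnRels m)

/-- The generator `p_{i+1}` (0-indexed `i`) of `G_{m+1}`. -/
def gnP (m : ℕ) (i : Fin (m + 1)) : GnGroup m := PresentedGroup.of (Sum.inl i)

/-- The generator `y_{j+1}` (0-indexed `j`) of `G_{m+1}`. -/
def gnY (m : ℕ) (j : Fin m) : GnGroup m := PresentedGroup.of (Sum.inr j)

/-- The generators `y_i p_i p_{i+1}⁻¹ y_i` (`1 ≤ i ≤ n-1`) and `p_n` (using the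
conventions `y_n = 1`, `p_{n+1} = 1`) of the subgroup `H_n ⊆ G_n`. -/
def gnH (m : ℕ) (i : Fin (m + 1)) : GnGroup m :=
  if h : (i : ℕ) < m then
    gnY m ⟨i, h⟩ * gnP m (Fin.castSucc ⟨i, h⟩) * (gnP m (Fin.succ ⟨i, h⟩))⁻¹ *
      gnY m ⟨i, h⟩
  else gnP m i

/-!
Let `F` be free on `p_1,…,p_n`. For each `j < n` the endomorphism `α_j` of `F` conjugating the
`p_i` with `i > j` by `p_j⁻¹ p_{j+1}` (and fixing the others) is an automorphism, whose inverse
conjugates the same `p_i` by `p_j p_{j+1}⁻¹`; the `α_j` pairwise commute, so `e_j ↦ α_j` is an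
action of `ℤ^{n-1}` on `F`. Sending `p_i ↦ p_i`, `y_j ↦ e_j` respects the relations of `G_n`,
giving `G_n → F ⋊ ℤ^{n-1}`. Conversely the relations say that conjugation by `y_j⁻¹` acts on the
`p_i` as `α_j⁻¹` does, which is the compatibility needed for a map `F ⋊ ℤ^{n-1} → G_n` back.
The composite on `G_n` is the identity, so `G_n` embeds in the semidirect product, with `N` and
`Q` going onto the two factors.
-/

theorem inv_mul_mul_eq_of_commute_mul {G : Type*} [Group G] {p y v : G}
    (h : Commute p (y * v)) : y⁻¹ * p * y = v * p * v⁻¹ :=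
  calc y⁻¹ * p * y = y⁻¹ * (p * (y * v)) * v⁻¹ := by group
    _ = y⁻¹ * (y * v * p) * v⁻¹ := by rw [h.eq]
    _ = v * p * v⁻¹ := by group

section SubgroupTransport

variable {G K A : Type*} [Group G] [Group K] [Group A] {θ : G →* K}

theorem Subgroup.map_closure_range_eq_range {ι : Type*} {f : A →* K} {a : ι → G} {b : ι → A}
    (hb : Subgroup.closure (Set.range b) = ⊤) (hab : ∀ i, θ (a i) = f (b i)) :
    (Subgroup.closure (Set.range a)).map θ = f.range := by
  have : θ ∘ a = f ∘ b := funext hab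
  rw [MonoidHom.map_closure, ← Set.range_comp, this, Set.range_comp, ← MonoidHom.map_closure, hb,
    ← MonoidHom.range_eq_map]

theorem Subgroup.normal_of_map_eq (hθ : Function.Injective θ) {H : Subgroup G} {L : Subgroup K}
    (hL : L.Normal) (h : H.map θ = L) : H.Normal := by
  rw [← H.comap_map_eq_self_of_injective hθ, h]
  exact hL.comap θ

noncomputable def Subgroup.equivOfMapEqRange (hθ : Function.Injective θ) {f : A →* K}
    (hf : Function.Injective f) {H : Subgroup G} (h : H.map θ = f.range) : H ≃* A :=
  ((H.equivMapOfInjective θ hθ).trans (MulEquiv.subgroupCongr h)).trans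
    (MonoidHom.ofInjective hf).symm

end SubgroupTransport

namespace SemidirectProduct

variable {N H : Type*} [Group N] [Group H] {φ : H →* MulAut N}

theorem range_inl_inf_range_inr :
    (inl : N →* N ⋊[φ] H).range ⊓ (inr : H →* N ⋊[φ] H).range = ⊥ := by
  rw [eq_bot_iff]
  rintro _ ⟨⟨n, rfl⟩, ⟨h, hh⟩⟩
  have h1 : h = 1 := by simpa using congrArg rightHom hh
  rw [Subgroup.mem_bot, ← hh, h1, map_one]

theorem commute_inl_inr_mul_inl_iff {n w : N} {h : H} :
    Commute (inl n : N ⋊[φ] H) (inr h * inl w) ↔ φ h (w * n * w⁻¹) = n := by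
  have hconj : (inr h * inl w : N ⋊[φ] H) * inl n * (inr h * inl w)⁻¹ =
      inl (φ h (w * n * w⁻¹)) := by
    rw [inl_aut]
    simp only [mul_inv_rev, map_mul, map_inv, mul_assoc]
  rw [← inl_inj (φ := φ), ← hconj, mul_inv_eq_iff_eq_mul, commute_iff_eq, eq_comm]

theorem commute_inl_inr_iff {n : N} {h : H} :
    Commute (inl n : N ⋊[φ] H) (inr h) ↔ φ h n = n := by
  simpa using commute_inl_inr_mul_inl_iff (n := n) (w := 1) (h := h)

theorem lift_compat_of_closure_eq_top {G : Type*} [Group G] (f : N →* G) (g : H →* G)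
    {s : Set H} (hs : Subgroup.closure s = ⊤)
    (hgen : ∀ h ∈ s, ∀ n, f (φ h n) = g h * f n * (g h)⁻¹) (h : H) :
    f.comp (φ h).toMonoidHom = (MulAut.conj (g h)).toMonoidHom.comp f := by
  have hmem : h ∈ Subgroup.closure s := hs ▸ Subgroup.mem_top h
  ext x
  simp only [MonoidHom.comp_apply, MulEquiv.coe_toMonoidHom, MulAut.conj_apply]
  induction hmem using Subgroup.closure_induction generalizing x with
  | mem h hh => exact hgen h hh _
  | one => simp
  | mul a b _ _ ha hb => simp only [map_mul, MulAut.mul_apply, ha, hb]; group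
  | inv a _ ha =>
    have := ha ((φ a)⁻¹ x)
    rw [MulAut.apply_inv_self] at this
    rw [map_inv, map_inv, this]
    group

end SemidirectProduct

section FreeAbelian

variable {ι : Type*} [Fintype ι] [DecidableEq ι]

theorem closure_range_ofAdd_single :
    Subgroup.closure (Set.range fun j : ι => Multiplicative.ofAdd (Pi.single j (1 : ℤ))) = ⊤ := by
  have h : AddSubgroup.closure (Set.range (Pi.basisFun ℤ ι)) = ⊤ := by
    rw [← Submodule.span_int_eq_addSubgroupClosure, (Pi.basisFun ℤ ι).span_eq,
      Submodule.top_toAddSubgroup]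
  have := congrArg AddSubgroup.toSubgroup h
  rw [AddSubgroup.toSubgroup_closure, OrderIso.map_top] at this
  convert this
  ext x
  simp [Multiplicative.ext_iff]

noncomputable def zpowersPiHom {G : Type*} [Group G] (g : ι → G)
    (hg : ∀ i j, Commute (g i) (g j)) : Multiplicative (ι → ℤ) →* G :=
  (MonoidHom.noncommPiCoprod (fun j => zpowersHom G (g j))
      (fun i j _ _ _ => (hg i j).zpow_zpow _ _)).comp
    (MulEquiv.funMultiplicative ι ℤ).toMonoidHom

theorem zpowersPiHom_ofAdd_single {G : Type*} [Group G] (g : ι → G)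
    (hg : ∀ i j, Commute (g i) (g j)) (j : ι) :
    zpowersPiHom g hg (Multiplicative.ofAdd (Pi.single j 1)) = g j := by
  have : MulEquiv.funMultiplicative ι ℤ (Multiplicative.ofAdd (Pi.single j 1)) =
      Pi.mulSingle j (Multiplicative.ofAdd 1) := by
    ext i; by_cases h : i = j <;> simp [h]
  rw [zpowersPiHom, MonoidHom.comp_apply, MulEquiv.coe_toMonoidHom, this]
  exact (MonoidHom.noncommPiCoprod_mulSingle ..).trans (zpow_one (g j))

end FreeAbelian

namespace FreeGroup

variable {α : Type*} (S : α → Prop) [DecidablePred S]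

def partialConj (w : FreeGroup α) : FreeGroup α →* FreeGroup α :=
  lift fun a => if S a then w * of a * w⁻¹ else of a

variable {S}

theorem partialConj_of_pos {w : FreeGroup α} {a : α} (ha : S a) :
    partialConj S w (of a) = w * of a * w⁻¹ := by
  rw [partialConj, lift_apply_of, if_pos ha]

theorem partialConj_of_neg {w : FreeGroup α} {a : α} (ha : ¬S a) :
    partialConj S w (of a) = of a := by
  rw [partialConj, lift_apply_of, if_neg ha]

theorem partialConj_comp_partialConj {w v : FreeGroup α} (h : partialConj S w v = w⁻¹) :
    (partialConj S w).comp (partialConj S v) = MonoidHom.id _ := by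
  ext a
  by_cases ha : S a
  · simp only [MonoidHom.comp_apply, MonoidHom.id_apply, partialConj_of_pos ha, _root_.map_mul,
      _root_.map_inv, h]
    group
  · simp [partialConj_of_neg ha]

theorem partialConj_comm {T : α → Prop} [DecidablePred T] (hTS : ∀ a, T a → S a)
    {w v : FreeGroup α} (hw : partialConj T v w = w) (hv : partialConj S w v = w * v * w⁻¹) :
    (partialConj S w).comp (partialConj T v) = (partialConj T v).comp (partialConj S w) := by
  ext a
  simp only [MonoidHom.comp_apply]
  by_cases haT : T a
  · simp only [partialConj_of_pos haT, partialConj_of_pos (hTS a haT), _root_.map_mul,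
      _root_.map_inv, hw, hv]
    group
  by_cases haS : S a
  · simp only [partialConj_of_neg haT, partialConj_of_pos haS, _root_.map_mul, _root_.map_inv, hw]
  · simp only [partialConj_of_neg haT, partialConj_of_neg haS]

variable (S) in
def partialConjEquiv (w v : FreeGroup α) (hwv : partialConj S w v = w⁻¹)
    (hvw : partialConj S v w = v⁻¹) : MulAut (FreeGroup α) :=
  (partialConj S w).toMulEquiv (partialConj S v) (partialConj_comp_partialConj hvw)
    (partialConj_comp_partialConj hwv)

theorem partialConjEquiv_apply {w v : FreeGroup α} (hwv : partialConj S w v = w⁻¹)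
    (hvw : partialConj S v w = v⁻¹) (x : FreeGroup α) :
    partialConjEquiv S w v hwv hvw x = partialConj S w x :=
  rfl

theorem partialConjEquiv_inv_apply {w v : FreeGroup α} (hwv : partialConj S w v = w⁻¹)
    (hvw : partialConj S v w = v⁻¹) (x : FreeGroup α) :
    (partialConjEquiv S w v hwv hvw)⁻¹ x = partialConj S v x :=
  rfl

end FreeGroup

theorem PresentedGroup.commute_mk_of_commutatorElement_mem {α : Type*}
    {rels : Set (FreeGroup α)} {a b : FreeGroup α} (h : ⁅a, b⁆ ∈ rels) :
    Commute (mk rels a) (mk rels b) := by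
  rw [← commutatorElement_eq_one_iff_commute, ← map_commutatorElement]
  exact one_of_mem h

open FreeGroup SemidirectProduct

section GnGroup

variable {m : ℕ}

theorem gnY_commute (i j : Fin m) : Commute (gnY m i) (gnY m j) :=
  PresentedGroup.commute_mk_of_commutatorElement_mem (Or.inl ⟨i, j, rfl⟩)

theorem gnP_commute_gnY {i : Fin (m + 1)} {j : Fin m} (h : (i : ℕ) ≤ j) :
    Commute (gnP m i) (gnY m j) :=
  PresentedGroup.commute_mk_of_commutatorElement_mem (Or.inr (Or.inl ⟨i, j, h, rfl⟩))

theorem gnP_commute_gnY_mul {i : Fin (m + 1)} {j : Fin m} (h : (j : ℕ) < i) :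
    Commute (gnP m i) (gnY m j * (gnP m j.castSucc * (gnP m j.succ)⁻¹)) := by
  rw [← mul_assoc]
  exact PresentedGroup.commute_mk_of_commutatorElement_mem (Or.inr (Or.inr ⟨i, j, h, rfl⟩))

theorem gnY_inv_mul_gnP_mul_gnY_of_le {i : Fin (m + 1)} {j : Fin m} (h : (i : ℕ) ≤ j) :
    (gnY m j)⁻¹ * gnP m i * gnY m j = gnP m i := by
  rw [mul_assoc, (gnP_commute_gnY h).eq, inv_mul_cancel_left]

theorem gnY_inv_mul_gnP_mul_gnY_of_lt {i : Fin (m + 1)} {j : Fin m} (h : (j : ℕ) < i) :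
    (gnY m j)⁻¹ * gnP m i * gnY m j =
      (gnP m j.succ * (gnP m j.castSucc)⁻¹)⁻¹ * gnP m i *
        (gnP m j.succ * (gnP m j.castSucc)⁻¹) := by
  rw [inv_mul_mul_eq_of_commute_mul (gnP_commute_gnY_mul h)]
  group

theorem partialConj_of_castSucc (j : Fin m) (w : FreeGroup (Fin (m + 1))) :
    partialConj (fun i : Fin (m + 1) => (j : ℕ) < i) w (of j.castSucc) = of j.castSucc :=
  partialConj_of_neg (by simp)

theorem partialConj_of_succ (j : Fin m) (w : FreeGroup (Fin (m + 1))) :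
    partialConj (fun i : Fin (m + 1) => (j : ℕ) < i) w (of j.succ) = w * of j.succ * w⁻¹ :=
  partialConj_of_pos (by simp)

variable (m) in
def gnAut (j : Fin m) : MulAut (FreeGroup (Fin (m + 1))) :=
  partialConjEquiv (fun i : Fin (m + 1) => (j : ℕ) < i)
    ((of j.castSucc)⁻¹ * of j.succ) (of j.castSucc * (of j.succ)⁻¹)
    (by simp only [_root_.map_mul, _root_.map_inv, partialConj_of_castSucc, partialConj_of_succ]
        group)
    (by simp only [_root_.map_mul, _root_.map_inv, partialConj_of_castSucc, partialConj_of_succ]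
        group)

theorem gnAut_of_of_le {i : Fin (m + 1)} {j : Fin m} (h : (i : ℕ) ≤ j) :
    gnAut m j (of i) = of i := by
  rw [gnAut, partialConjEquiv_apply]
  exact partialConj_of_neg (not_lt.2 h)

theorem gnAut_inv_of_of_le {i : Fin (m + 1)} {j : Fin m} (h : (i : ℕ) ≤ j) :
    (gnAut m j)⁻¹ (of i) = of i := by
  rw [gnAut, partialConjEquiv_inv_apply]
  exact partialConj_of_neg (not_lt.2 h)

theorem gnAut_inv_of_of_lt {i : Fin (m + 1)} {j : Fin m} (h : (j : ℕ) < i) :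
    (gnAut m j)⁻¹ (of i) =
      of j.castSucc * (of j.succ)⁻¹ * of i * (of j.castSucc * (of j.succ)⁻¹)⁻¹ := by
  rw [gnAut, partialConjEquiv_inv_apply]
  exact partialConj_of_pos h

theorem gnAut_commute (j k : Fin m) : Commute (gnAut m j) (gnAut m k) := by
  wlog hjk : (j : ℕ) < k generalizing j k
  · rcases (not_lt.1 hjk).lt_or_eq with h | h
    · exact (this k j h).symm
    · rw [Fin.ext h]
  refine MulEquiv.ext fun x =>
    DFunLike.congr_fun (partialConj_comm (fun _ hi => hjk.trans hi) ?_ ?_) x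
  · simp only [_root_.map_mul, _root_.map_inv]
    rw [partialConj_of_neg (by simp; omega), partialConj_of_neg (by simp; omega)]
  · simp only [_root_.map_mul, _root_.map_inv]
    rw [partialConj_of_pos (by simp; omega), partialConj_of_pos (by simp; omega)]
    group

variable (m) in
noncomputable def gnAction : Multiplicative (Fin m → ℤ) →* MulAut (FreeGroup (Fin (m + 1))) :=
  zpowersPiHom (gnAut m) gnAut_commute

theorem gnAction_ofAdd_single (j : Fin m) :
    gnAction m (Multiplicative.ofAdd (Pi.single j 1)) = gnAut m j :=
  zpowersPiHom_ofAdd_single _ _ j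

variable (m) in
abbrev GnSemidirect : Type :=
  FreeGroup (Fin (m + 1)) ⋊[gnAction m] Multiplicative (Fin m → ℤ)

variable (m) in
noncomputable def gnSemidirectGen : Fin (m + 1) ⊕ Fin m → GnSemidirect m :=
  Sum.elim (fun i => inl (of i)) (fun j => inr (Multiplicative.ofAdd (Pi.single j 1)))

theorem lift_gnSemidirectGen_gnRels :
    ∀ r ∈ gnRels m, FreeGroup.lift (gnSemidirectGen m) r = 1 := by
  rintro r (⟨i, j, rfl⟩ | ⟨i, j, h, rfl⟩ | ⟨i, j, h, rfl⟩) <;>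
    simp only [map_commutatorElement, commutatorElement_eq_one_iff_commute, _root_.map_mul,
      _root_.map_inv, gnFreeP, gnFreeY, lift_apply_of, gnSemidirectGen, Sum.elim_inl, Sum.elim_inr]
  · exact (Commute.all _ _).map inr
  · rw [commute_inl_inr_iff, gnAction_ofAdd_single, gnAut_of_of_le h]
  · rw [mul_assoc, ← _root_.map_inv, ← _root_.map_mul, commute_inl_inr_mul_inl_iff,
      gnAction_ofAdd_single, ← gnAut_inv_of_of_lt h, MulAut.apply_inv_self]

variable (m) in
noncomputable def gnToSemidirect : GnGroup m →* GnSemidirect m :=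
  PresentedGroup.toGroup lift_gnSemidirectGen_gnRels

theorem gnToSemidirect_gnP (i : Fin (m + 1)) : gnToSemidirect m (gnP m i) = inl (of i) :=
  PresentedGroup.toGroup.of _

theorem gnToSemidirect_gnY (j : Fin m) :
    gnToSemidirect m (gnY m j) = inr (Multiplicative.ofAdd (Pi.single j 1)) :=
  PresentedGroup.toGroup.of _

theorem lift_gnP_comp_gnAut_inv (j : Fin m) :
    (FreeGroup.lift (gnP m)).comp (gnAut m j)⁻¹.toMonoidHom =
      (MulAut.conj (gnY m j)⁻¹).toMonoidHom.comp (FreeGroup.lift (gnP m)) := by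
  ext i
  simp only [MonoidHom.comp_apply, MulEquiv.coe_toMonoidHom, MulAut.conj_apply, inv_inv,
    lift_apply_of]
  rcases le_or_gt (i : ℕ) j with h | h
  · rw [gnAut_inv_of_of_le h, lift_apply_of, gnY_inv_mul_gnP_mul_gnY_of_le h]
  · rw [gnAut_inv_of_of_lt h, gnY_inv_mul_gnP_mul_gnY_of_lt h]
    simp only [_root_.map_mul, _root_.map_inv, lift_apply_of]
    group

theorem lift_gnP_comp_gnAction (q : Multiplicative (Fin m → ℤ)) :
    (FreeGroup.lift (gnP m)).comp (gnAction m q).toMonoidHom =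
      (MulAut.conj (zpowersPiHom (gnY m) gnY_commute q)).toMonoidHom.comp
        (FreeGroup.lift (gnP m)) := by
  refine lift_compat_of_closure_eq_top _ _ closure_range_ofAdd_single ?_ q
  rintro _ ⟨j, rfl⟩ x
  have h := DFunLike.congr_fun (lift_gnP_comp_gnAut_inv j) (gnAut m j x)
  simp only [MonoidHom.comp_apply, MulEquiv.coe_toMonoidHom, MulAut.inv_apply_self,
    MulAut.conj_apply, inv_inv] at h
  rw [gnAction_ofAdd_single, zpowersPiHom_ofAdd_single, h]
  group

variable (m) in
noncomputable def gnOfSemidirect : GnSemidirect m →* GnGroup m :=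
  SemidirectProduct.lift (FreeGroup.lift (gnP m)) (zpowersPiHom (gnY m) gnY_commute)
    lift_gnP_comp_gnAction

theorem gnOfSemidirect_gnToSemidirect (g : GnGroup m) :
    gnOfSemidirect m (gnToSemidirect m g) = g := by
  suffices (gnOfSemidirect m).comp (gnToSemidirect m) = MonoidHom.id _ from
    DFunLike.congr_fun this g
  refine PresentedGroup.ext fun x => ?_
  rcases x with i | j
  · change gnOfSemidirect m (gnToSemidirect m (gnP m i)) = gnP m i
    rw [gnToSemidirect_gnP, gnOfSemidirect, lift_inl, lift_apply_of]
  · change gnOfSemidirect m (gnToSemidirect m (gnY m j)) = gnY m j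
    rw [gnToSemidirect_gnY, gnOfSemidirect, lift_inr, zpowersPiHom_ofAdd_single]

end GnGroup

/-- In `G_n` (`n = m+1`): the subgroup `N = ⟨p_1,…,p_n⟩` is normal and free of rank
`n`, `Q = ⟨y_1,…,y_{n-1}⟩` is free abelian of rank `n-1`, `G_n = N ⋊ Q`
(internally: `N ⊓ Q = ⊥`, `N ⊔ Q = ⊤`), and the conjugation action is
`p_i^{y_j} = p_i^{p_{j+1} p_j⁻¹}` for `j < i` and `p_i^{y_j} = p_i` for `j ≥ i`. -/
theorem gn_semidirect_structure (m : ℕ) :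
    (Subgroup.closure (Set.range (gnP m))).Normal ∧
    Nonempty (Subgroup.closure (Set.range (gnP m)) ≃* FreeGroup (Fin (m + 1))) ∧
    Nonempty (Subgroup.closure (Set.range (gnY m)) ≃* Multiplicative (Fin m → ℤ)) ∧
    Subgroup.closure (Set.range (gnP m)) ⊓ Subgroup.closure (Set.range (gnY m)) = ⊥ ∧
    Subgroup.closure (Set.range (gnP m)) ⊔ Subgroup.closure (Set.range (gnY m)) = ⊤ ∧
    (∀ (i : Fin (m + 1)) (j : Fin m), (j : ℕ) < (i : ℕ) →
      (gnY m j)⁻¹ * gnP m i * gnY m j =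
        (gnP m j.succ * (gnP m j.castSucc)⁻¹)⁻¹ * gnP m i *
          (gnP m j.succ * (gnP m j.castSucc)⁻¹)) ∧
    (∀ (i : Fin (m + 1)) (j : Fin m), (i : ℕ) ≤ (j : ℕ) →
      (gnY m j)⁻¹ * gnP m i * gnY m j = gnP m i) := by
  have hinj : Function.Injective (gnToSemidirect m) :=
    Function.LeftInverse.injective gnOfSemidirect_gnToSemidirect
  have hN : (Subgroup.closure (Set.range (gnP m))).map (gnToSemidirect m) = inl.range :=
    Subgroup.map_closure_range_eq_range (FreeGroup.closure_range_of _) gnToSemidirect_gnP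
  have hQ : (Subgroup.closure (Set.range (gnY m))).map (gnToSemidirect m) = inr.range :=
    Subgroup.map_closure_range_eq_range closure_range_ofAdd_single gnToSemidirect_gnY
  have hinl : (inl : FreeGroup (Fin (m + 1)) →* GnSemidirect m).range.Normal := by
    rw [range_inl_eq_ker_rightHom]
    exact rightHom.normal_ker
  refine ⟨Subgroup.normal_of_map_eq hinj hinl hN,
    ⟨Subgroup.equivOfMapEqRange hinj inl_injective hN⟩,
    ⟨Subgroup.equivOfMapEqRange hinj inr_injective hQ⟩, ?_, ?_,
    fun _ _ => gnY_inv_mul_gnP_mul_gnY_of_lt, fun _ _ => gnY_inv_mul_gnP_mul_gnY_of_le⟩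
  · rw [← Subgroup.map_eq_bot_iff_of_injective _ hinj, Subgroup.map_inf_eq _ _ _ hinj, hN, hQ,
      range_inl_inf_range_inr]
  · rw [← Subgroup.closure_union, ← Set.Sum.elim_range]
    have := PresentedGroup.closure_range_of (gnRels m)
    rwa [← Sum.elim_comp_inl_inr PresentedGroup.of] at this
end

section
/- Let F_n ⋊ ℤ^{n-1} be the semidirect product where F_n is free on x_1,…,x_n, ℤ^{n-1} is free abelian on y_1,…,y_{n-1}, and the action is x_i^{y_j} = x_i^{x_j⁻¹} for j < i, x_i^{y_i} = x_i^{(x_i x_{i+1} ⋯ x_n)⁻¹}, and x_i^{y_j} = x_i for j > i. Setting p_i := x_i x_{i+1} ⋯ x_n (and p_{n+1} := 1), the elements p_1,…,p_n form a free basis of F_n and the action on them is p_i^{y_j} = p_i^{p_{j+1} p_j⁻¹} for j < i and p_i^{y_j} = p_i for j ≥ i. -/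
/-!
Since `p_i = x_i p_{i+1}` (with `p_k = 1` past the end), the substitution `x_i ↦ p_i` of the free
group is inverted by `x_i ↦ x_i x_{i+1}⁻¹`, which transports the basis `x` to the basis `p`.
Conjugation by `y_j` is an automorphism, so it acts on `p_i = x_i ⋯ x_n` factor by factor. For
`j < i` it is conjugation by `x_j = p_j p_{j+1}⁻¹` on every factor. For `i ≤ j` it fixes
`x_i, …, x_{j-1}`, and it fixes `p_j = x_j p_{j+1}` because
`p_j^{y_j} = (p_j x_j p_j⁻¹)(x_j p_{j+1} x_j⁻¹) = p_j`.
-/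

open Function

section SuffixProd

variable {M N : Type*} [Monoid M] [Monoid N] {n : ℕ}

theorem Fin.extend_val_of_le {α : Type*} (f : Fin n → α) (e : ℕ → α) {k : ℕ} (hk : n ≤ k) :
    extend Fin.val f e k = e k :=
  extend_apply' _ _ _ fun ⟨a, ha⟩ => by omega

-- The paper's `p_{i+1}`, indices being 0-based.
def suffixProd (f : Fin n → M) (i : ℕ) : M :=
  (((List.finRange n).drop i).map f).prod

theorem List.filter_le_finRange_eq_drop (i : Fin n) :
    (List.finRange n).filter (fun k => i ≤ k) = (List.finRange n).drop i := by
  conv_lhs => rw [← List.take_append_drop i (List.finRange n), List.filter_append]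
  rw [List.filter_eq_nil_iff.mpr, List.filter_eq_self.mpr, List.nil_append]
  · intro k hk
    obtain ⟨t, ht, rfl⟩ := List.mem_drop_iff_getElem.mp hk
    simp [Fin.le_def]
  · intro k hk
    obtain ⟨t, ht, rfl⟩ := List.mem_take_iff_getElem.mp hk
    simp only [List.getElem_finRange, List.length_finRange, Fin.cast_mk, Fin.le_def,
      decide_eq_true_eq, Fin.is_le', inf_of_le_left] at ht ⊢
    omega

theorem suffixProd_of_le (f : Fin n → M) {i : ℕ} (h : n ≤ i) : suffixProd f i = 1 := by
  simp [suffixProd, List.drop_eq_nil_of_le, h]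

theorem suffixProd_eq_mul (f : Fin n → M) (i : Fin n) :
    suffixProd f i = f i * suffixProd f (i + 1) := by
  simp only [suffixProd]
  rw [List.drop_eq_getElem_cons (by simp)]
  simp

theorem eq_suffixProd_mul_inv {G : Type*} [Group G] (f : Fin n → G) (i : Fin n) :
    f i = suffixProd f i * (suffixProd f (i + 1))⁻¹ := by
  rw [suffixProd_eq_mul, mul_inv_cancel_right]

theorem map_suffixProd {F : Type*} [FunLike F M N] [MonoidHomClass F M N] (φ : F)
    (f : Fin n → M) (i : ℕ) : φ (suffixProd f i) = suffixProd (φ ∘ f) i := by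
  rw [suffixProd, suffixProd, map_list_prod, List.map_map]

theorem suffixProd_congr {f g : Fin n → M} {i : ℕ} (h : ∀ k : Fin n, i ≤ k → f k = g k) :
    suffixProd f i = suffixProd g i := by
  refine congrArg List.prod (List.map_congr_left fun k hk => h k ?_)
  obtain ⟨t, ht, rfl⟩ := List.mem_drop_iff_getElem.mp hk
  simp

theorem map_suffixProd_eq_self_of_le (φ : M →* M) (f : Fin n → M) {i j : ℕ} (hij : i ≤ j)
    (hf : ∀ k : Fin n, (k : ℕ) < j → φ (f k) = f k) (hj : φ (suffixProd f j) = suffixProd f j) :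
    φ (suffixProd f i) = suffixProd f i := by
  induction hij using Nat.decreasingInduction with
  | self => exact hj
  | of_succ k hk ih =>
    rcases lt_or_ge k n with hkn | hkn
    · rw [suffixProd_eq_mul f ⟨k, hkn⟩, _root_.map_mul, ih, hf _ hk]
    · rw [suffixProd_of_le f hkn, _root_.map_one]

end SuffixProd

namespace FreeGroup

variable (n : ℕ)

noncomputable def suffixProdHom : FreeGroup (Fin n) →* FreeGroup (Fin n) :=
  lift fun i => suffixProd of i

noncomputable def suffixProdInvHom : FreeGroup (Fin n) →* FreeGroup (Fin n) :=
  lift fun i => of i * (extend Fin.val of 1 (i + 1))⁻¹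

variable {n}

theorem suffixProdHom_extend_val_of (k : ℕ) :
    suffixProdHom n (extend Fin.val of 1 k) = suffixProd of k := by
  rcases lt_or_ge k n with hk | hk
  · obtain ⟨i, rfl⟩ : ∃ i : Fin n, (i : ℕ) = k := ⟨⟨k, hk⟩, rfl⟩
    rw [Fin.val_injective.extend_apply, suffixProdHom, lift_apply_of]
  · rw [Fin.extend_val_of_le _ _ hk, Pi.one_apply, _root_.map_one, suffixProd_of_le _ hk]

theorem suffixProdInvHom_suffixProd (k : ℕ) :
    suffixProdInvHom n (suffixProd of k) = extend Fin.val of 1 k := by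
  rcases le_or_gt k n with hk | hk
  · induction hk using Nat.decreasingInduction with
    | self =>
      rw [suffixProd_of_le _ le_rfl, _root_.map_one, Fin.extend_val_of_le _ _ le_rfl, Pi.one_apply]
    | of_succ k hk ih =>
      rw [suffixProd_eq_mul of ⟨k, hk⟩, _root_.map_mul, ih, suffixProdInvHom, lift_apply_of,
        inv_mul_cancel_right]
      exact (Fin.val_injective.extend_apply _ _ ⟨k, hk⟩).symm
  · rw [suffixProd_of_le _ hk.le, _root_.map_one, Fin.extend_val_of_le _ _ hk.le, Pi.one_apply]

noncomputable def suffixProdEquiv : FreeGroup (Fin n) ≃* FreeGroup (Fin n) :=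
  (suffixProdHom n).toMulEquiv (suffixProdInvHom n)
    (ext_hom _ _ fun i => by
      rw [MonoidHom.comp_apply, suffixProdHom, lift_apply_of, suffixProdInvHom_suffixProd,
        Fin.val_injective.extend_apply, MonoidHom.id_apply])
    (ext_hom _ _ fun i => by
      rw [MonoidHom.comp_apply, suffixProdInvHom, lift_apply_of, _root_.map_mul, _root_.map_inv,
        suffixProdHom_extend_val_of, suffixProdHom, lift_apply_of, ← eq_suffixProd_mul_inv,
        MonoidHom.id_apply])

theorem suffixProdEquiv_of (i : Fin n) : suffixProdEquiv (of i) = suffixProd of i :=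
  lift_apply_of

end FreeGroup

section Action

variable {G : Type*} [Group G] {m : ℕ} {x : Fin (m + 1) → G} {y : Fin m → G}

theorem conj_suffixProd_of_lt
    (hxlt : ∀ (i : Fin (m + 1)) (j : Fin m), (j : ℕ) < (i : ℕ) →
      (y j)⁻¹ * x i * y j = x j.castSucc * x i * (x j.castSucc)⁻¹)
    (j : Fin m) {i : ℕ} (hji : (j : ℕ) < i) :
    (y j)⁻¹ * suffixProd x i * y j = x j.castSucc * suffixProd x i * (x j.castSucc)⁻¹ := by
  calc (y j)⁻¹ * suffixProd x i * y j = (MulAut.conj (y j)).symm (suffixProd x i) := rfl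
    _ = suffixProd ((MulAut.conj (y j)).symm ∘ x) i := map_suffixProd _ x i
    _ = suffixProd (MulAut.conj (x j.castSucc) ∘ x) i :=
      suffixProd_congr fun k hk => hxlt k j (hji.trans_le hk)
    _ = MulAut.conj (x j.castSucc) (suffixProd x i) := (map_suffixProd _ x i).symm

theorem conj_suffixProd_of_le
    (hxlt : ∀ (i : Fin (m + 1)) (j : Fin m), (j : ℕ) < (i : ℕ) →
      (y j)⁻¹ * x i * y j = x j.castSucc * x i * (x j.castSucc)⁻¹)
    (hxeq : ∀ (i : Fin (m + 1)) (j : Fin m), (j : ℕ) = (i : ℕ) →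
      (y j)⁻¹ * x i * y j = suffixProd x i * x i * (suffixProd x i)⁻¹)
    (hxgt : ∀ (i : Fin (m + 1)) (j : Fin m), (i : ℕ) < (j : ℕ) →
      (y j)⁻¹ * x i * y j = x i)
    (j : Fin m) {i : ℕ} (hij : i ≤ j) :
    (y j)⁻¹ * suffixProd x i * y j = suffixProd x i := by
  have hsplit : suffixProd x j = x j.castSucc * suffixProd x (j + 1) :=
    suffixProd_eq_mul x j.castSucc
  have hj : (y j)⁻¹ * suffixProd x j * y j = suffixProd x j := by
    calc (y j)⁻¹ * suffixProd x j * y j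
        = ((y j)⁻¹ * x j.castSucc * y j) * ((y j)⁻¹ * suffixProd x (j + 1) * y j) := by
          rw [hsplit]; group
      _ = suffixProd x j := by
          rw [hxeq _ j (by simp), conj_suffixProd_of_lt hxlt j (Nat.lt_succ_self _),
            Fin.val_castSucc, hsplit]
          group
  exact map_suffixProd_eq_self_of_le (MulAut.conj (y j)).symm.toMonoidHom x hij
    (fun k hk => hxgt k j hk) hj

end Action

theorem action_in_p_basis_general {G : Type*} [Group G] (m : ℕ)
    (x p : Fin (m + 1) → G) (y : Fin m → G)
    (hp : ∀ i, p i = (((List.finRange (m + 1)).filter fun k => i ≤ k).map x).prod)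
    (hxlt : ∀ (i : Fin (m + 1)) (j : Fin m), (j : ℕ) < (i : ℕ) →
      (y j)⁻¹ * x i * y j = x j.castSucc * x i * (x j.castSucc)⁻¹)
    (hxeq : ∀ (i : Fin (m + 1)) (j : Fin m), (j : ℕ) = (i : ℕ) →
      (y j)⁻¹ * x i * y j = p i * x i * (p i)⁻¹)
    (hxgt : ∀ (i : Fin (m + 1)) (j : Fin m), (i : ℕ) < (j : ℕ) →
      (y j)⁻¹ * x i * y j = x i)
    (hbasis : ∃ e : FreeGroup (Fin (m + 1)) ≃* Subgroup.closure (Set.range x),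
      ∀ i, ((e (FreeGroup.of i) : G) = x i)) :
    (∃ e' : FreeGroup (Fin (m + 1)) ≃* Subgroup.closure (Set.range x),
      ∀ i, ((e' (FreeGroup.of i) : G) = p i)) ∧
    (∀ (i : Fin (m + 1)) (j : Fin m), (j : ℕ) < (i : ℕ) →
      (y j)⁻¹ * p i * y j =
        p j.castSucc * (p j.succ)⁻¹ * p i * p j.succ * (p j.castSucc)⁻¹) ∧
    (∀ (i : Fin (m + 1)) (j : Fin m), (i : ℕ) ≤ (j : ℕ) →
      (y j)⁻¹ * p i * y j = p i) := by
  obtain rfl : p = fun i : Fin (m + 1) => suffixProd x i :=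
    funext fun i => by rw [hp, List.filter_le_finRange_eq_drop]; rfl
  refine ⟨?_, fun i j hji => ?_, fun i j hij => conj_suffixProd_of_le hxlt hxeq hxgt j hij⟩
  · obtain ⟨e, he⟩ := hbasis
    refine ⟨FreeGroup.suffixProdEquiv.trans e, fun i => ?_⟩
    have hmap := map_suffixProd ((Subgroup.closure (Set.range x)).subtype.comp e.toMonoidHom)
      FreeGroup.of i
    simpa [FreeGroup.suffixProdEquiv_of, comp_def, he] using hmap
  · rw [conj_suffixProd_of_lt hxlt j hji, eq_suffixProd_mul_inv x j.castSucc]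
    simp only [Fin.val_castSucc, Fin.val_succ]
    group

/-- In the semidirect product `F_n ⋊ ℤ^{n-1}` (here realized inside any group `G`
containing elements `x_1,…,x_n` freely generating a free subgroup and commuting
elements `y_1,…,y_{n-1}` acting by `x_i^{y_j} = x_i^{x_j⁻¹}` for `j < i`,
`x_i^{y_i} = x_i^{(x_i ⋯ x_n)⁻¹}`, `x_i^{y_j} = x_i` for `j > i`), the suffix
products `p_i := x_i x_{i+1} ⋯ x_n` form a free basis of `F_n`, and the action on
them is `p_i^{y_j} = p_i^{p_{j+1} p_j⁻¹}` for `j < i` and `p_i^{y_j} = p_i` for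
`j ≥ i`.  (Indices are 0-based; `n = m + 1`, `g^h = h⁻¹ g h`.) -/
theorem action_in_p_basis {G : Type*} [Group G] (m : ℕ)
    (x p : Fin (m + 1) → G) (y : Fin m → G)
    (hy : ∀ j k, Commute (y j) (y k))
    (hp : ∀ i, p i = (((List.finRange (m + 1)).filter fun k => i ≤ k).map x).prod)
    (hxlt : ∀ (i : Fin (m + 1)) (j : Fin m), (j : ℕ) < (i : ℕ) →
      (y j)⁻¹ * x i * y j = x j.castSucc * x i * (x j.castSucc)⁻¹)
    (hxeq : ∀ (i : Fin (m + 1)) (j : Fin m), (j : ℕ) = (i : ℕ) →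
      (y j)⁻¹ * x i * y j = p i * x i * (p i)⁻¹)
    (hxgt : ∀ (i : Fin (m + 1)) (j : Fin m), (i : ℕ) < (j : ℕ) →
      (y j)⁻¹ * x i * y j = x i)
    (hbasis : ∃ e : FreeGroup (Fin (m + 1)) ≃* Subgroup.closure (Set.range x),
      ∀ i, ((e (FreeGroup.of i) : G) = x i)) :
    (∃ e' : FreeGroup (Fin (m + 1)) ≃* Subgroup.closure (Set.range x),
      ∀ i, ((e' (FreeGroup.of i) : G) = p i)) ∧
    (∀ (i : Fin (m + 1)) (j : Fin m), (j : ℕ) < (i : ℕ) →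
      (y j)⁻¹ * p i * y j =
        p j.castSucc * (p j.succ)⁻¹ * p i * p j.succ * (p j.castSucc)⁻¹) ∧
    (∀ (i : Fin (m + 1)) (j : Fin m), (i : ℕ) ≤ (j : ℕ) →
      (y j)⁻¹ * p i * y j = p i) :=
  action_in_p_basis_general m x p y hp hxlt hxeq hxgt hbasis
end

section
/- Let G be a group with a subgroup K, an element t, and a subgroup A ⊆ K such that G = ⟨K, t | [t,a] = 1 for a ∈ A⟩ is the HNN extension with identity associated isomorphism. Let L ⊆ K be a subgroup with L ∩ A = 1 such that ⟨L, t⟩ ≅ L * ⟨t⟩ is free with t an element of a free basis. Then ⟨L, t⟩ ∩ ⟨A, t⟩ = ⟨t⟩. -/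
private lemma my_cons_eq_append {β : Type*} :
    ∀ (w : List β) (a : β), a :: w = w ++ [a] → w = List.replicate w.length a := by
  intro w
  induction w with
  | nil => intro a _; rfl
  | cons b w ih =>
    intro a h
    rw [List.cons_append] at h
    injection h with h1 h2
    subst h1
    have h3 := ih a h2
    rw [List.length_cons, List.replicate_succ, ← h3]

private lemma my_red_eq_of_length {β : Type*} {L₁ L₂ : List (β × Bool)}
    (h : FreeGroup.Red L₁ L₂) (hl : L₁.length = L₂.length) : L₁ = L₂ := by
  rcases Relation.ReflTransGen.cases_head h with rfl | ⟨L', hs, hr⟩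
  · rfl
  · exfalso
    have h1 := hs.length
    have h2 : L₂.length ≤ L'.length := FreeGroup.Red.length_le hr
    omega

private lemma my_reduce_tail {β : Type*} [DecidableEq β] {p : β × Bool} {w : List (β × Bool)}
    (h : FreeGroup.reduce (p :: w) = p :: w) : FreeGroup.reduce w = w := by
  have hle : (FreeGroup.reduce w).length ≤ w.length := FreeGroup.reduce.red.length_le
  rw [FreeGroup.reduce.cons] at h
  rcases hrw : FreeGroup.reduce w with _ | ⟨hd, tl⟩
  · rw [hrw] at h
    injection h
  · rw [hrw] at h hle
    have h' : (if p.1 = hd.1 ∧ p.2 = !hd.2 then tl else p :: hd :: tl) = p :: w := h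
    by_cases hc : p.1 = hd.1 ∧ p.2 = !hd.2
    · rw [if_pos hc] at h'
      exfalso
      have := congrArg List.length h'
      simp at this hle
      omega
    · rw [if_neg hc] at h'
      injection h'

private lemma my_commute_mem_zpowers {β : Type*} [DecidableEq β] (i : β) :
    ∀ (n : ℕ) (x : FreeGroup β), x.toWord.length ≤ n → Commute x (FreeGroup.of i) →
      x ∈ Subgroup.zpowers (FreeGroup.of i) := by
  intro n
  induction n with
  | zero =>
    intro x hl _
    have : x.toWord = [] := List.eq_nil_of_length_eq_zero (Nat.le_zero.mp hl)
    rw [FreeGroup.toWord_eq_nil_iff] at this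
    rw [this]
    exact Subgroup.one_mem _
  | succ n ih =>
    intro x hl hc
    rcases hw : x.toWord with _ | ⟨⟨j, b⟩, w'⟩
    · rw [FreeGroup.toWord_eq_nil_iff] at hw
      rw [hw]
      exact Subgroup.one_mem _
    · have hredw : FreeGroup.reduce x.toWord = x.toWord := FreeGroup.reduce_toWord x
      by_cases hib : j = i ∧ b = false
      · have hw : x.toWord = (i, false) :: w' := by rw [hw, hib.1, hib.2]
        -- x = (of i)⁻¹ * mk w'
        have hmk1 : FreeGroup.mk [(i, false)] = (FreeGroup.of i)⁻¹ := by
          rw [show FreeGroup.of i = FreeGroup.mk [(i, true)] from rfl, FreeGroup.inv_mk]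
          rfl
        have hx : FreeGroup.of i * x = FreeGroup.mk w' := by
          conv_lhs => rw [← FreeGroup.mk_toWord (x := x), hw]
          rw [show ((i, false) :: w') = [(i, false)] ++ w' from rfl,
            ← FreeGroup.mul_mk, ← mul_assoc, hmk1,
            show FreeGroup.of i = FreeGroup.mk [(i, true)] from rfl]
          rw [show FreeGroup.mk [(i,true)] = FreeGroup.of i from rfl, mul_inv_cancel, one_mul]
        have hred' : FreeGroup.reduce w' = w' := by
          rw [hw] at hredw
          exact my_reduce_tail hredw
        have hl' : (FreeGroup.of i * x).toWord.length ≤ n := by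
          rw [hx, FreeGroup.toWord_mk, hred']
          have : x.toWord.length = w'.length + 1 := by rw [hw]; rfl
          omega
        have hc' : Commute (FreeGroup.of i * x) (FreeGroup.of i) :=
          Commute.mul_left (Commute.refl _) hc
        have hmem := ih _ hl' hc'
        have hxeq : x = (FreeGroup.of i)⁻¹ * (FreeGroup.of i * x) := by
          rw [← mul_assoc, inv_mul_cancel, one_mul]
        rw [hxeq]
        exact Subgroup.mul_mem _ (Subgroup.inv_mem _ (Subgroup.mem_zpowers _)) hmem
      · -- head is not (i, false)
        have h1 : (FreeGroup.of i * x).toWord = (i, true) :: x.toWord := by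
          rw [show FreeGroup.of i * x = FreeGroup.mk ([(i, true)] ++ x.toWord) by
            rw [← FreeGroup.mul_mk, FreeGroup.mk_toWord]; rfl]
          rw [FreeGroup.toWord_mk, List.singleton_append, FreeGroup.reduce.cons, hredw, hw]
          show (if (i : β) = j ∧ (true : Bool) = !b then w'
              else (i, true) :: (j, b) :: w') = (i, true) :: (j, b) :: w'
          rw [if_neg]
          rintro ⟨rfl, hb⟩
          exact hib ⟨rfl, by simpa using hb.symm⟩
        have h2 : FreeGroup.reduce (x.toWord ++ [(i, true)]) = (i, true) :: x.toWord := by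
          have : (x * FreeGroup.of i).toWord = FreeGroup.reduce (x.toWord ++ [(i, true)]) := by
            rw [show x * FreeGroup.of i
              = FreeGroup.mk (x.toWord ++ [(i, true)]) by
                rw [← FreeGroup.mul_mk, FreeGroup.mk_toWord]; rfl]
            rw [FreeGroup.toWord_mk]
          rw [← this, hc, h1]
        have h3 : x.toWord ++ [(i, true)] = (i, true) :: x.toWord := by
          apply my_red_eq_of_length
          · rw [← h2]; exact FreeGroup.reduce.red
          · simp
        have h4 : x.toWord = List.replicate x.toWord.length (i, true) :=
          my_cons_eq_append _ _ h3.symm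
        have h5 : x = FreeGroup.of i ^ x.toWord.length := by
          apply FreeGroup.toWord_injective
          rw [FreeGroup.toWord_of_pow, ← h4]
        rw [h5]
        exact Subgroup.pow_mem _ (Subgroup.mem_zpowers _) _

private lemma my_free_commute {β : Type*} (i : β) (x : FreeGroup β)
    (hc : Commute x (FreeGroup.of i)) : x ∈ Subgroup.zpowers (FreeGroup.of i) := by
  classical
  exact my_commute_mem_zpowers i x.toWord.length x le_rfl hc


/-- Let `G = ⟨K, t | [t,a] = 1, a ∈ A⟩` be the HNN extension of `K` with identity
associated isomorphism of the subgroup `A`, and let `L ≤ K` with `L ⊓ A = ⊥` be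
such that `⟨L, t⟩` is free with `t` an element of a free basis (with the remaining
basis elements coming from `L`).  Then `⟨L, t⟩ ∩ ⟨A, t⟩ = ⟨t⟩`. -/
theorem hnn_intersection_eq_zpowers {K : Type*} [Group K] (A L : Subgroup K)
    (hLA : L ⊓ A = ⊥)
    (hfree : ∃ (ι : Type) (e : FreeGroup (Option ι) ≃*
        (Subgroup.closure
          ((HNNExtension.of '' (L : Set K)) ∪ {(HNNExtension.t :
            HNNExtension K A A (MulEquiv.refl A))}))),
      ((e (FreeGroup.of none) :
          HNNExtension K A A (MulEquiv.refl A)) = HNNExtension.t) ∧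
      ∀ i : ι, ((e (FreeGroup.of (some i)) : HNNExtension K A A (MulEquiv.refl A)) ∈
        HNNExtension.of '' (L : Set K))) :
    Subgroup.closure
        ((HNNExtension.of '' (L : Set K)) ∪ {(HNNExtension.t :
          HNNExtension K A A (MulEquiv.refl A))}) ⊓
      Subgroup.closure ((HNNExtension.of '' (A : Set K)) ∪ {HNNExtension.t}) =
      Subgroup.zpowers (HNNExtension.t : HNNExtension K A A (MulEquiv.refl A)) := by
  obtain ⟨ι, e, het, -⟩ := hfree
  apply le_antisymm
  · rintro x ⟨hxL, hxA⟩
    -- t commutes with every element of ⟨A, t⟩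
    have hcomm : Commute (HNNExtension.t : HNNExtension K A A (MulEquiv.refl A)) x := by
      refine Subgroup.closure_induction ?_ (Commute.one_right _)
        (fun g h _ _ hg hh => hg.mul_right hh) (fun g _ hg => hg.inv_right) hxA
      rintro g (⟨a, ha, rfl⟩ | rfl)
      · show HNNExtension.t * HNNExtension.of a = HNNExtension.of a * HNNExtension.t
        simpa using HNNExtension.t_mul_of (φ := (MulEquiv.refl A)) ⟨a, ha⟩
      · exact Commute.refl _
    have htSL : (HNNExtension.t : HNNExtension K A A (MulEquiv.refl A)) ∈
        Subgroup.closure ((HNNExtension.of '' (L : Set K)) ∪ {HNNExtension.t}) :=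
      Subgroup.subset_closure (Or.inr rfl)
    let SL := Subgroup.closure ((HNNExtension.of '' (L : Set K)) ∪ {(HNNExtension.t :
      HNNExtension K A A (MulEquiv.refl A))})
    let xS : SL := ⟨x, hxL⟩
    let tS : SL := ⟨HNNExtension.t, htSL⟩
    have hetS : e (FreeGroup.of none) = tS := Subtype.ext het
    have hcommS : Commute (e.symm xS) (FreeGroup.of (none : Option ι)) := by
      have h1 : Commute xS tS := Subtype.ext hcomm.eq.symm
      have h2 := h1.map e.symm.toMonoidHom
      simpa [← hetS] using h2
    obtain ⟨m, hm⟩ := Subgroup.mem_zpowers_iff.mp (my_free_commute none (e.symm xS) hcommS)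
    have hxm : xS = tS ^ m := by
      have h3 := congrArg e hm
      rw [map_zpow, hetS, MulEquiv.apply_symm_apply] at h3
      exact h3.symm
    refine Subgroup.mem_zpowers_iff.mpr ⟨m, ?_⟩
    have := congrArg (Subtype.val) hxm
    simpa using this.symm
  · refine le_inf (Subgroup.zpowers_le.mpr (Subgroup.subset_closure (Or.inr rfl)))
      (Subgroup.zpowers_le.mpr (Subgroup.subset_closure (Or.inr rfl)))
end
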